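/- arXiv:2101.05141 — 5 statements merged into one kernel-verified Lean document; each statement's English description precedes it below -/
import Mathlib

section
/- Let s ∈ (0,1), t ∈ [2s, 2+2s], ε ∈ (0, 2s], k ∈ (0,1], and let M, N be nonnegative integers. Then there exists a constant C depending only on s and λ₁ (and not on k, M, N, ε, t, or f) such that for every real sequence f = (f_j)_{j≥1} with ∑_{j≥1} λ_j^{t-2s} f_j² < ∞, the sinc approximation u_k := Q_k^{-s} f satisfies ‖u_k‖_{Ḣ^{t-ε}} ≤ C · max(1, ε^{-1}) · ‖f‖_{Ḣ^{t-2s}}. -/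
/-!
At an eigenvalue `lam` the quadrature acts by `k sin(πs)/π · ∑ₗ e^{(1-s)kℓ} / (e^{kℓ} + lam)`, so it
suffices to bound this symbol by `C max(1, ε⁻¹) lam^{-(s - ε/2)}`. Since
`e^{kℓ} + lam ≥ e^{(1-σ)kℓ} lam^σ` for every `σ ∈ [0, 1]`, the nodes `ℓ ≤ 0` (take `σ = 1`) give a
geometric series of ratio `e^{-(1-s)k}` against `lam⁻¹ ≤ max(1, lam₁⁻¹) lam^{-(s - ε/2)}`, and the
nodes `ℓ > 0` (take `σ = s - ε/2`) one of ratio `e^{-kε/2}` against `lam^{-(s - ε/2)}`. Multiplied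
by `k`, a geometric series of ratio `e^{-ak}` is at most `1 + a⁻¹`; for `a = ε/2` this is the
factor `ε⁻¹`.
-/

open Real Finset

theorem sum_exp_neg_mul_abs_le {a : ℝ} (ha : 0 < a) {S : Finset ℤ}
    (hS : Set.InjOn Int.natAbs S) :
    ∑ ℓ ∈ S, exp (-(a * |(ℓ : ℝ)|)) ≤ (1 - exp (-a))⁻¹ := by
  have hr : exp (-a) < 1 := exp_lt_one_iff.mpr (neg_lt_zero.mpr ha)
  have hpow : ∀ ℓ : ℤ, exp (-(a * |(ℓ : ℝ)|)) = exp (-a) ^ ℓ.natAbs := fun ℓ => by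
    rw [← exp_nat_mul, Nat.cast_natAbs, Int.cast_abs]
    ring_nf
  classical
  calc ∑ ℓ ∈ S, exp (-(a * |(ℓ : ℝ)|)) = ∑ n ∈ S.image Int.natAbs, exp (-a) ^ n := by
        rw [sum_image hS]
        exact sum_congr rfl fun ℓ _ => hpow ℓ
    _ ≤ ∑' n : ℕ, exp (-a) ^ n :=
        (summable_geometric_of_lt_one (exp_nonneg _) hr).sum_le_tsum _
          fun n _ => pow_nonneg (exp_nonneg _) n
    _ = (1 - exp (-a))⁻¹ := tsum_geometric_of_lt_one (exp_nonneg _) hr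

theorem inv_one_sub_exp_neg_le {a : ℝ} (ha : 0 < a) : (1 - exp (-a))⁻¹ ≤ 1 + a⁻¹ := by
  have hexp : a + 1 ≤ exp a := add_one_le_exp a
  have hsub : 0 < exp a - 1 := by linarith
  calc (1 - exp (-a))⁻¹ = 1 + (exp a - 1)⁻¹ := by
        rw [exp_neg]
        field_simp
        ring
    _ ≤ 1 + a⁻¹ := by gcongr; linarith

theorem rpow_mul_rpow_le_add {a b σ : ℝ} (ha : 0 ≤ a) (hb : 0 ≤ b) (hσ0 : 0 ≤ σ) (hσ1 : σ ≤ 1) :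
    a ^ (1 - σ) * b ^ σ ≤ a + b :=
  calc a ^ (1 - σ) * b ^ σ ≤ (1 - σ) * a + σ * b :=
        geom_mean_le_arith_mean2_weighted (by linarith) hσ0 ha hb (by ring)
    _ ≤ a + b := by nlinarith

theorem exp_mul_inv_exp_add_le {s σ lam : ℝ} (hσ0 : 0 ≤ σ) (hσ1 : σ ≤ 1) (hlam : 0 < lam)
    (x : ℝ) : exp ((1 - s) * x) * (exp x + lam)⁻¹ ≤ exp ((σ - s) * x) * lam ^ (-σ) := by
  have hmean := rpow_mul_rpow_le_add (exp_nonneg x) hlam.le hσ0 hσ1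
  calc exp ((1 - s) * x) * (exp x + lam)⁻¹
      ≤ exp ((1 - s) * x) * (exp x ^ (1 - σ) * lam ^ σ)⁻¹ := by gcongr
    _ = exp ((σ - s) * x) * lam ^ (-σ) := by
        rw [← exp_mul, mul_inv, ← exp_neg, ← mul_assoc, ← exp_add, rpow_neg hlam.le]
        ring_nf

theorem mul_sum_le_of_le_exp_neg_mul_abs {S : Finset ℤ} (hS : Set.InjOn Int.natAbs S)
    {g : ℤ → ℝ} {a k B : ℝ} (ha : 0 < a) (hk : 0 < k) (hk1 : k ≤ 1) (hB : 0 ≤ B)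
    (hg : ∀ ℓ ∈ S, g ℓ ≤ exp (-(a * k * |(ℓ : ℝ)|)) * B) :
    k * ∑ ℓ ∈ S, g ℓ ≤ (1 + a⁻¹) * B := by
  have hak : 0 < a * k := mul_pos ha hk
  calc k * ∑ ℓ ∈ S, g ℓ ≤ k * ((∑ ℓ ∈ S, exp (-(a * k * |(ℓ : ℝ)|))) * B) := by
        rw [sum_mul]; gcongr with ℓ hℓ; exact hg ℓ hℓ
    _ ≤ k * ((1 + (a * k)⁻¹) * B) := by
        gcongr
        exact (sum_exp_neg_mul_abs_le hak hS).trans (inv_one_sub_exp_neg_le hak)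
    _ = (k + a⁻¹) * B := by field_simp
    _ ≤ (1 + a⁻¹) * B := by gcongr

theorem inv_le_max_one_inv_mul_rpow_neg {lam₁ lam σ : ℝ} (hlam₁ : 0 < lam₁) (hlam : lam₁ ≤ lam)
    (hσ0 : 0 ≤ σ) (hσ1 : σ ≤ 1) : lam⁻¹ ≤ max 1 lam₁⁻¹ * lam ^ (-σ) := by
  have hlam0 : 0 < lam := hlam₁.trans_le hlam
  have hsplit : lam⁻¹ = lam ^ (σ - 1) * lam ^ (-σ) := by
    rw [← rpow_add hlam0, show σ - 1 + -σ = -1 by ring, rpow_neg_one]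
  rw [hsplit]
  gcongr
  calc lam ^ (σ - 1) ≤ lam₁ ^ (σ - 1) := rpow_le_rpow_of_nonpos hlam₁ hlam (by linarith)
    _ ≤ max 1 lam₁⁻¹ := by
        rcases le_total 1 lam₁ with h | h
        · exact (rpow_le_one_of_one_le_of_nonpos h (by linarith)).trans (le_max_left _ _)
        · refine le_trans ?_ (le_max_right _ _)
          rw [← rpow_neg_one]
          exact rpow_le_rpow_of_exponent_ge hlam₁ h (by linarith)

noncomputable def sincSum (s k lam : ℝ) (M N : ℕ) : ℝ :=
  ∑ ℓ ∈ Icc (-(M : ℤ)) N, exp ((1 - s) * (k * ℓ)) * (exp (k * ℓ) + lam)⁻¹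

theorem sincSum_nonneg (s k : ℝ) {lam : ℝ} (hlam : 0 ≤ lam) (M N : ℕ) :
    0 ≤ sincSum s k lam M N :=
  sum_nonneg fun _ _ => by positivity

theorem mul_sincSum_le {s lam₁ lam ε k : ℝ} (hs1 : s < 1) (hlam₁ : 0 < lam₁) (hlam : lam₁ ≤ lam)
    (hε : 0 < ε) (hεs : ε ≤ 2 * s) (hk : 0 < k) (hk1 : k ≤ 1) (M N : ℕ) :
    k * sincSum s k lam M N ≤
      ((1 + (1 - s)⁻¹) * max 1 lam₁⁻¹ + 3) * max 1 ε⁻¹ * lam ^ (-(s - ε / 2)) := by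
  have hlam0 : 0 < lam := hlam₁.trans_le hlam
  set σ := s - ε / 2 with hσ
  have hσ0 : 0 ≤ σ := by linarith
  have hσ1 : σ ≤ 1 := by linarith
  have hnonpos : k * ∑ ℓ ∈ Icc (-(M : ℤ)) N with ℓ ≤ 0, exp ((1 - s) * (k * ℓ)) *
      (exp (k * ℓ) + lam)⁻¹ ≤ (1 + (1 - s)⁻¹) * lam⁻¹ := by
    refine mul_sum_le_of_le_exp_neg_mul_abs (fun x hx y hy => ?_) (sub_pos.2 hs1) hk hk1
      (inv_nonneg.2 hlam0.le) fun ℓ hℓ => ?_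
    · exact (Int.natAbs_inj_of_nonpos_of_nonpos (mem_filter.1 hx).2 (mem_filter.1 hy).2).1
    · have hℓ0 : (ℓ : ℝ) ≤ 0 := by exact_mod_cast (mem_filter.1 hℓ).2
      have := exp_mul_inv_exp_add_le (s := s) zero_le_one le_rfl hlam0 (k * ℓ)
      rw [rpow_neg_one] at this
      rw [abs_of_nonpos hℓ0]
      convert this using 3
      ring
  have hpos : k * ∑ ℓ ∈ Icc (-(M : ℤ)) N with ¬ℓ ≤ 0, exp ((1 - s) * (k * ℓ)) *
      (exp (k * ℓ) + lam)⁻¹ ≤ (1 + (ε / 2)⁻¹) * lam ^ (-σ) := by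
    refine mul_sum_le_of_le_exp_neg_mul_abs (fun x hx y hy => ?_) (half_pos hε) hk hk1
      (by positivity) fun ℓ hℓ => ?_
    · exact (Int.natAbs_inj_of_nonneg_of_nonneg (not_le.1 (mem_filter.1 hx).2).le
        (not_le.1 (mem_filter.1 hy).2).le).1
    · have hℓ0 : (0 : ℝ) ≤ ℓ := by exact_mod_cast (not_le.1 (mem_filter.1 hℓ).2).le
      have := exp_mul_inv_exp_add_le (s := s) hσ0 hσ1 hlam0 (k * ℓ)
      rw [abs_of_nonneg hℓ0]
      convert this using 3
      ring
  have hinv := inv_le_max_one_inv_mul_rpow_neg hlam₁ hlam hσ0 hσ1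
  have hε2 : 1 + (ε / 2)⁻¹ ≤ 3 * max 1 ε⁻¹ := by
    rw [inv_div, div_eq_mul_inv]
    linarith [le_max_left 1 ε⁻¹, le_max_right 1 ε⁻¹]
  have hC : 0 ≤ (1 + (1 - s)⁻¹) * max 1 lam₁⁻¹ := by
    have : 0 < 1 - s := by linarith
    positivity
  have hmax : 1 ≤ max 1 ε⁻¹ := le_max_left _ _
  have hpow : 0 ≤ lam ^ (-σ) := by positivity
  rw [sincSum, ← sum_filter_add_sum_filter_not _ (fun ℓ : ℤ => ℓ ≤ 0), mul_add]
  calc _ ≤ (1 + (1 - s)⁻¹) * lam⁻¹ + (1 + (ε / 2)⁻¹) * lam ^ (-σ) := add_le_add hnonpos hpos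
    _ ≤ (1 + (1 - s)⁻¹) * (max 1 lam₁⁻¹ * lam ^ (-σ)) + 3 * max 1 ε⁻¹ * lam ^ (-σ) := by
        gcongr
    _ ≤ _ := by nlinarith [mul_le_mul_of_nonneg_left hmax (mul_nonneg hC hpow)]

theorem abs_mul_sin_div_pi_mul_le {k S : ℝ} (hk : 0 ≤ k) (hS : 0 ≤ S) (x : ℝ) :
    |k * sin x / π * S| ≤ k * S := by
  rw [abs_mul, abs_div, abs_mul, abs_of_nonneg hk, abs_of_pos pi_pos, abs_of_nonneg hS]
  gcongr
  rw [div_le_iff₀ pi_pos]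
  nlinarith [abs_sin_le_one x, pi_gt_three]

theorem rpow_mul_mul_sq_le {lam m K σ : ℝ} (hlam : 0 < lam) (hm : |m| ≤ K * lam ^ (-σ))
    (p x : ℝ) : lam ^ p * (m * x) ^ 2 ≤ K ^ 2 * (lam ^ (p - 2 * σ) * x ^ 2) := by
  have hm2 : m ^ 2 ≤ K ^ 2 * lam ^ (-(2 * σ)) := by
    rw [← sq_abs, show -(2 * σ) = -σ * 2 by ring, rpow_mul hlam.le, rpow_two, ← mul_pow]
    exact pow_le_pow_left₀ (abs_nonneg m) hm 2
  calc lam ^ p * (m * x) ^ 2 = lam ^ p * m ^ 2 * x ^ 2 := by ring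
    _ ≤ lam ^ p * (K ^ 2 * lam ^ (-(2 * σ))) * x ^ 2 := by gcongr
    _ = K ^ 2 * (lam ^ (p - 2 * σ) * x ^ 2) := by
        rw [sub_eq_add_neg, rpow_add hlam]
        ring

theorem summable_and_sqrt_tsum_le {ι : Type*} {a b : ι → ℝ} {K : ℝ} (hK : 0 ≤ K)
    (ha : ∀ i, 0 ≤ a i) (hab : ∀ i, a i ≤ K ^ 2 * b i) (hb : Summable b) :
    Summable a ∧ √(∑' i, a i) ≤ K * √(∑' i, b i) := by
  have hKb : Summable fun i => K ^ 2 * b i := hb.mul_left _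
  have hsum : Summable a := .of_nonneg_of_le ha hab hKb
  refine ⟨hsum, ?_⟩
  calc √(∑' i, a i) ≤ √(K ^ 2 * ∑' i, b i) := by
        rw [← tsum_mul_left]
        exact sqrt_le_sqrt (hsum.tsum_le_tsum hab hKb)
    _ = K * √(∑' i, b i) := by rw [sqrt_mul (sq_nonneg K), sqrt_sq hK]

theorem sinc_stability_general (s lam1 : ℝ) (hs1 : s < 1) (hlam1 : 0 < lam1) :
    ∃ C : ℝ, 0 < C ∧
      ∀ (lam : ℕ → ℝ), (∀ j, lam1 ≤ lam j) →
      ∀ (t ε k : ℝ), 2 * s ≤ t → t ≤ 2 + 2 * s → 0 < ε → ε ≤ 2 * s → 0 < k → k ≤ 1 →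
      ∀ (M N : ℕ) (f : ℕ → ℝ), Summable (fun j => lam j ^ (t - 2 * s) * f j ^ 2) →
        Summable (fun j => lam j ^ (t - ε) *
          ((k * Real.sin (Real.pi * s) / Real.pi) *
            ∑ ℓ ∈ Finset.Icc (-(M : ℤ)) (N : ℤ),
              Real.exp ((1 - s) * (k * ℓ)) * (Real.exp (k * ℓ) + lam j)⁻¹ * f j) ^ 2) ∧
        Real.sqrt (∑' j, lam j ^ (t - ε) *
          ((k * Real.sin (Real.pi * s) / Real.pi) *
            ∑ ℓ ∈ Finset.Icc (-(M : ℤ)) (N : ℤ),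
              Real.exp ((1 - s) * (k * ℓ)) * (Real.exp (k * ℓ) + lam j)⁻¹ * f j) ^ 2) ≤
        C * max 1 ε⁻¹ * Real.sqrt (∑' j, lam j ^ (t - 2 * s) * f j ^ 2) := by
  have hs : 0 < 1 - s := sub_pos.2 hs1
  refine ⟨(1 + (1 - s)⁻¹) * max 1 lam1⁻¹ + 3, by positivity,
    fun lam hlam t ε k _ _ hε hεs hk hk1 M N f hf => ?_⟩
  have hlam0 : ∀ j, 0 < lam j := fun j => hlam1.trans_le (hlam j)
  have hmultiplier : ∀ j, |k * sin (π * s) / π * sincSum s k (lam j) M N| ≤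
      ((1 + (1 - s)⁻¹) * max 1 lam1⁻¹ + 3) * max 1 ε⁻¹ * lam j ^ (-(s - ε / 2)) := fun j =>
    (abs_mul_sin_div_pi_mul_le hk.le (sincSum_nonneg s k (hlam0 j).le M N) _).trans
      (mul_sincSum_le hs1 hlam1 (hlam j) hε hεs hk hk1 M N)
  simp_rw [← sum_mul, ← mul_assoc (k * sin (π * s) / π)]
  refine summable_and_sqrt_tsum_le (by positivity) (fun j => ?_) (fun j => ?_) hf
  · have := hlam0 j
    positivity
  · have := rpow_mul_mul_sq_le (hlam0 j) (hmultiplier j) (t - ε) (f j)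
    rwa [show t - ε - 2 * (s - ε / 2) = t - 2 * s by ring] at this

/-- Stability of the sinc quadrature (Lemma 4.1, spectral form): for
`s ∈ (0,1)` and `λ₁ > 0` there is a constant `C` depending only on `s` and `λ₁` such that
for all eigenvalue sequences `λ_j ≥ λ₁`, all `t ∈ [2s, 2+2s]`, `ε ∈ (0, 2s]`, `k ∈ (0,1]`,
all nonnegative integers `M, N` and all `f` with finite `Ḣ^{t-2s}` norm, the sinc
approximation `u_k = Q_k^{-s} f` satisfies
`‖u_k‖_{Ḣ^{t-ε}} ≤ C max(1, ε⁻¹) ‖f‖_{Ḣ^{t-2s}}`. -/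
theorem sinc_stability (s lam1 : ℝ) (hs0 : 0 < s) (hs1 : s < 1) (hlam1 : 0 < lam1) :
    ∃ C : ℝ, 0 < C ∧
      ∀ (lam : ℕ → ℝ), (∀ j, lam1 ≤ lam j) →
      ∀ (t ε k : ℝ), 2 * s ≤ t → t ≤ 2 + 2 * s → 0 < ε → ε ≤ 2 * s → 0 < k → k ≤ 1 →
      ∀ (M N : ℕ) (f : ℕ → ℝ), Summable (fun j => lam j ^ (t - 2 * s) * f j ^ 2) →
        Summable (fun j => lam j ^ (t - ε) *
          ((k * Real.sin (Real.pi * s) / Real.pi) *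
            ∑ ℓ ∈ Finset.Icc (-(M : ℤ)) (N : ℤ),
              Real.exp ((1 - s) * (k * ℓ)) * (Real.exp (k * ℓ) + lam j)⁻¹ * f j) ^ 2) ∧
        Real.sqrt (∑' j, lam j ^ (t - ε) *
          ((k * Real.sin (Real.pi * s) / Real.pi) *
            ∑ ℓ ∈ Finset.Icc (-(M : ℤ)) (N : ℤ),
              Real.exp ((1 - s) * (k * ℓ)) * (Real.exp (k * ℓ) + lam j)⁻¹ * f j) ^ 2) ≤
        C * max 1 ε⁻¹ * Real.sqrt (∑' j, lam j ^ (t - 2 * s) * f j ^ 2) :=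
  sinc_stability_general s lam1 hs1 hlam1
end

section
/- Let s ∈ (0,1), k > 0, and let M, N be nonnegative integers. Then for every f ∈ ℓ², the sinc approximation satisfies ‖Q_k^{-s} f‖ ≤ (sin(πs)/π) · max(1, λ₁^{-1}) · (1/s + 1/(1-s) + 2k) · ‖f‖; in particular Q_k^{-s} is bounded on ℓ² uniformly in M and N and, for k ≤ 1, uniformly in k. -/
/-!
`Q_k^{-s}` acts diagonally, so it suffices to bound the scalar weight
`k ∑ₗ e^{(1-s)kℓ} / (e^{kℓ} + λ)` uniformly in `λ ≥ λ₁`. For `ℓ ≤ 0` the summand is at most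
`λ₁⁻¹ e^{-(1-s)k|ℓ|}`, for `ℓ ≥ 0` at most `e^{-skℓ}`. Each of these geometric sums, multiplied
by `k`, is at most `1/a + k` (with `a = 1 - s`, resp. `a = s`), because `1 + ak ≤ e^{ak}`.
-/

open Finset Real

lemma lp.exists_norm_le_mul_of_forall_norm_le {α : Type*} {E : α → Type*}
    [∀ i, NormedAddCommGroup (E i)] [∀ i, NormedSpace ℝ (E i)] {p : ENNReal} (hp : p ≠ 0)
    {C : ℝ} (hC : 0 ≤ C) (f : lp E p) {g : ∀ i, E i} (hg : ∀ i, ‖g i‖ ≤ C * ‖f i‖) :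
    ∃ hmem : Memℓp g p, ‖(⟨g, hmem⟩ : lp E p)‖ ≤ C * ‖f‖ := by
  have hCf : ∀ i, ‖g i‖ ≤ ‖(C • f) i‖ := fun i => by
    simpa [norm_smul, abs_of_nonneg hC] using hg i
  refine ⟨(lp.memℓp (C • f)).mono' hCf, ?_⟩
  calc _ ≤ ‖C • f‖ := lp.norm_mono hp hCf
    _ = C * ‖f‖ := by rw [lp.norm_const_smul hp, Real.norm_of_nonneg hC]

lemma sum_Icc_neg_le_sum_range_add_sum_range {g : ℤ → ℝ} (hg : ∀ ℓ, 0 ≤ g ℓ) (M N : ℕ) :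
    ∑ ℓ ∈ Icc (-(M : ℤ)) N, g ℓ ≤
      ∑ m ∈ range (M + 1), g (-m) + ∑ m ∈ range (N + 1), g m := by
  set neg := (range (M + 1)).image fun m : ℕ => -(m : ℤ)
  set pos := (range (N + 1)).image fun m : ℕ => (m : ℤ)
  have hsub : Icc (-(M : ℤ)) N ⊆ neg ∪ pos := by
    intro ℓ hℓ
    simp only [mem_Icc] at hℓ
    simp only [neg, pos, mem_union, mem_image, mem_range]
    rcases le_or_gt ℓ 0 with hℓ0 | hℓ0
    · exact Or.inl ⟨(-ℓ).toNat, by omega, by omega⟩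
    · exact Or.inr ⟨ℓ.toNat, by omega, by omega⟩
  calc ∑ ℓ ∈ Icc (-(M : ℤ)) N, g ℓ ≤ ∑ ℓ ∈ neg ∪ pos, g ℓ :=
        sum_le_sum_of_subset_of_nonneg hsub fun ℓ _ _ => hg ℓ
    _ ≤ ∑ ℓ ∈ neg, g ℓ + ∑ ℓ ∈ pos, g ℓ := by
        rw [← sum_union_inter]
        exact le_add_of_nonneg_right (sum_nonneg fun ℓ _ => hg ℓ)
    _ ≤ _ := add_le_add (sum_image_le_of_nonneg fun ℓ _ => hg ℓ)
        (sum_image_le_of_nonneg fun ℓ _ => hg ℓ)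

lemma mul_sum_range_exp_neg_le {a k : ℝ} (ha : 0 < a) (hk : 0 < k) (n : ℕ) :
    k * ∑ m ∈ range n, exp (-(a * (k * m))) ≤ 1 / a + k := by
  set r := exp (-(a * k))
  have hr1 : r < 1 := exp_lt_one_iff.2 (neg_lt_zero.2 (mul_pos ha hk))
  have hgeom : ∑ m ∈ range n, exp (-(a * (k * m))) ≤ (1 - r)⁻¹ :=
    calc ∑ m ∈ range n, exp (-(a * (k * m))) = ∑ m ∈ Ico 0 n, r ^ m := by
          rw [range_eq_Ico]
          refine sum_congr rfl fun m _ => ?_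
          rw [← exp_nat_mul]
          ring_nf
      _ ≤ r ^ 0 / (1 - r) := geom_sum_Ico_le_of_lt_one (exp_pos _).le hr1
      _ = (1 - r)⁻¹ := by rw [pow_zero, one_div]
  have hexp : (1 + a * k) * r ≤ 1 :=
    calc (1 + a * k) * r ≤ exp (a * k) * r := by gcongr; linarith [add_one_le_exp (a * k)]
      _ = 1 := by rw [← exp_add]; simp
  have hkr : k * (1 - r)⁻¹ ≤ 1 / a + k := by
    rw [← div_eq_mul_inv, div_le_iff₀ (by linarith)]
    field_simp
    nlinarith
  exact (mul_le_mul_of_nonneg_left hgeom hk.le).trans hkr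

lemma exp_mul_inv_exp_add_le_exp_neg {lam : ℝ} (hlam : 0 ≤ lam) (s x : ℝ) :
    exp ((1 - s) * x) * (exp x + lam)⁻¹ ≤ exp (-(s * x)) :=
  calc exp ((1 - s) * x) * (exp x + lam)⁻¹ ≤ exp ((1 - s) * x) * (exp x)⁻¹ := by
        gcongr; linarith
    _ = exp (-(s * x)) := by rw [← exp_neg, ← exp_add]; ring_nf

lemma exp_mul_inv_exp_add_le_inv_mul_exp {lam1 lam : ℝ} (hlam1 : 0 < lam1) (hlam : lam1 ≤ lam)
    (s x : ℝ) : exp ((1 - s) * x) * (exp x + lam)⁻¹ ≤ lam1⁻¹ * exp ((1 - s) * x) := by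
  rw [mul_comm]
  gcongr
  linarith [exp_pos x]

lemma mul_sum_sinc_weights_le {lam1 lam : ℝ} (hlam1 : 0 < lam1) (hlam : lam1 ≤ lam)
    {s k : ℝ} (hs0 : 0 < s) (hs1 : s < 1) (hk : 0 < k) (M N : ℕ) :
    k * ∑ ℓ ∈ Icc (-(M : ℤ)) N, exp ((1 - s) * (k * ℓ)) * (exp (k * ℓ) + lam)⁻¹ ≤
      lam1⁻¹ * (1 / (1 - s) + k) + (1 / s + k) := by
  have hlam0 : 0 < lam := hlam1.trans_le hlam
  have hneg (m : ℕ) : exp ((1 - s) * (k * ↑(-(m : ℤ)))) * (exp (k * ↑(-(m : ℤ))) + lam)⁻¹ ≤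
      lam1⁻¹ * exp (-((1 - s) * (k * m))) := by
    convert exp_mul_inv_exp_add_le_inv_mul_exp hlam1 hlam s _ using 3
    all_goals push_cast; ring
  have hpos (m : ℕ) : exp ((1 - s) * (k * ↑(m : ℤ))) * (exp (k * ↑(m : ℤ)) + lam)⁻¹ ≤
      exp (-(s * (k * m))) :=
    mod_cast exp_mul_inv_exp_add_le_exp_neg hlam0.le s _
  calc _ ≤ k * (∑ m ∈ range (M + 1), lam1⁻¹ * exp (-((1 - s) * (k * m))) +
        ∑ m ∈ range (N + 1), exp (-(s * (k * m)))) := by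
        gcongr
        refine (sum_Icc_neg_le_sum_range_add_sum_range (fun ℓ => by positivity) M N).trans ?_
        exact add_le_add (sum_le_sum fun m _ => hneg m) (sum_le_sum fun m _ => hpos m)
    _ = lam1⁻¹ * (k * ∑ m ∈ range (M + 1), exp (-((1 - s) * (k * m)))) +
        k * ∑ m ∈ range (N + 1), exp (-(s * (k * m))) := by rw [← mul_sum]; ring
    _ ≤ _ := by
        gcongr
        · exact mul_sum_range_exp_neg_le (by linarith) hk _
        · exact mul_sum_range_exp_neg_le hs0 hk _

/-- Uniform `ℓ²`-boundedness of the sinc quadrature operator (spectral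
model, eigenvalues `λ_j ≥ λ₁ > 0`): for `s ∈ (0,1)`, `k > 0` and nonnegative integers
`M, N`, for every `f ∈ ℓ²` the sinc approximation `Q_k^{-s} f` lies in `ℓ²` and
`‖Q_k^{-s} f‖ ≤ (sin(πs)/π) max(1, λ₁⁻¹) (1/s + 1/(1-s) + 2k) ‖f‖`. -/
theorem sinc_l2_bounded (lam1 : ℝ) (hlam1 : 0 < lam1) (lam : ℕ → ℝ)
    (hlam : ∀ j, lam1 ≤ lam j) (s k : ℝ) (hs0 : 0 < s) (hs1 : s < 1) (hk : 0 < k)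
    (M N : ℕ) (f : lp (fun _ : ℕ => ℝ) 2) :
    ∃ hmem : Memℓp (fun j =>
        (k * Real.sin (Real.pi * s) / Real.pi) *
          ∑ ℓ ∈ Finset.Icc (-(M : ℤ)) (N : ℤ),
            Real.exp ((1 - s) * (k * ℓ)) * (Real.exp (k * ℓ) + lam j)⁻¹ * f j) 2,
      ‖(⟨fun j =>
        (k * Real.sin (Real.pi * s) / Real.pi) *
          ∑ ℓ ∈ Finset.Icc (-(M : ℤ)) (N : ℤ),
            Real.exp ((1 - s) * (k * ℓ)) * (Real.exp (k * ℓ) + lam j)⁻¹ * f j,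
        hmem⟩ : lp (fun _ : ℕ => ℝ) 2)‖ ≤
        (Real.sin (Real.pi * s) / Real.pi) * max 1 lam1⁻¹ *
          (1 / s + 1 / (1 - s) + 2 * k) * ‖f‖ := by
  have hsin : 0 ≤ sin (π * s) / π :=
    div_nonneg (sin_nonneg_of_nonneg_of_le_pi (by positivity) (by nlinarith [pi_pos])) pi_pos.le
  have hC : 0 ≤ sin (π * s) / π * max 1 lam1⁻¹ * (1 / s + 1 / (1 - s) + 2 * k) := by
    have := one_div_pos.2 (sub_pos.2 hs1)
    positivity
  refine lp.exists_norm_le_mul_of_forall_norm_le two_ne_zero hC f fun j => ?_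
  have hlamj : 0 < lam j := hlam1.trans_le (hlam j)
  have hw : 0 ≤ k * ∑ ℓ ∈ Icc (-(M : ℤ)) N, exp ((1 - s) * (k * ℓ)) * (exp (k * ℓ) + lam j)⁻¹ := by
    positivity
  calc _ = sin (π * s) / π *
        (k * ∑ ℓ ∈ Icc (-(M : ℤ)) N, exp ((1 - s) * (k * ℓ)) * (exp (k * ℓ) + lam j)⁻¹) * ‖f j‖ := by
        rw [← sum_mul, ← mul_assoc, mul_div_assoc, mul_comm k, mul_assoc (sin (π * s) / π),
          norm_mul, Real.norm_of_nonneg (mul_nonneg hsin hw)]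
    _ ≤ sin (π * s) / π * (max 1 lam1⁻¹ * (1 / (1 - s) + k) + max 1 lam1⁻¹ * (1 / s + k)) *
        ‖f j‖ := by
        gcongr sin (π * s) / π * ?_ * ‖f j‖
        refine (mul_sum_sinc_weights_le hlam1 (hlam j) hs0 hs1 hk M N).trans (add_le_add ?_ ?_)
        · gcongr
          exact le_max_right _ _
        · exact le_mul_of_one_le_left (by positivity) (le_max_left _ _)
    _ = _ := by ring
end

section
/- Let U and V be real vector spaces, let L : U → U and L_T : V → V be linear maps, let P, Q : U → V be linear maps, and let μ be a real scalar. Assume L, L_T, μ·id_U + L and μ·id_V + L_T are all bijective, and write T := L^{-1}, T_T := L_T^{-1}, R := (μ·id_U + L)^{-1}, R_T := (μ·id_V + L_T)^{-1}. Then P ∘ R − R_T ∘ Q = R_T ∘ ( L_T ∘ (P ∘ T − T_T ∘ Q) ∘ L + μ·(P − Q) ) ∘ R. -/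
/-! Since `T ∘ L = id` and `L_T ∘ T_T = id`, the middle operator simplifies to
`(μ + L_T) ∘ P − Q ∘ (μ + L)`; sandwiching it between the resolvents `R_T` and `R` cancels the
shifted operators and leaves `P ∘ R − R_T ∘ Q`. -/

namespace LinearMap

variable {S M N : Type*} [Ring S] [AddCommGroup M] [Module S M] [AddCommGroup N] [Module S N]

theorem comp_sub_comp_comp_eq_of_inverse {L T : M →ₗ[S] M} {LT TT : N →ₗ[S] N}
    (P Q : M →ₗ[S] N) (hT : T ∘ₗ L = id) (hTT : LT ∘ₗ TT = id) :
    LT ∘ₗ (P ∘ₗ T - TT ∘ₗ Q) ∘ₗ L = LT ∘ₗ P - Q ∘ₗ L := by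
  simp only [sub_comp, comp_sub, comp_assoc, hT, comp_id]
  rw [← comp_assoc _ TT, hTT, id_comp]

theorem comp_sub_comp_comp_eq_sub {A R : M →ₗ[S] M} {B RB : N →ₗ[S] N}
    (P Q : M →ₗ[S] N) (hR : A ∘ₗ R = id) (hRB : RB ∘ₗ B = id) :
    RB ∘ₗ (B ∘ₗ P - Q ∘ₗ A) ∘ₗ R = P ∘ₗ R - RB ∘ₗ Q := by
  rw [sub_comp, comp_sub, comp_assoc, comp_assoc, hR, comp_id, ← comp_assoc, ← comp_assoc,
    hRB, id_comp]

end LinearMap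

theorem error_representation_general {U V : Type*} [AddCommGroup U] [Module ℝ U]
    [AddCommGroup V] [Module ℝ V]
    (L T : U →ₗ[ℝ] U) (LT TT : V →ₗ[ℝ] V) (P Q : U →ₗ[ℝ] V) (μ : ℝ)
    (R : U →ₗ[ℝ] U) (RT : V →ₗ[ℝ] V)
    (hT2 : T ∘ₗ L = LinearMap.id)
    (hTT1 : LT ∘ₗ TT = LinearMap.id)
    (hR1 : (μ • LinearMap.id + L) ∘ₗ R = LinearMap.id)
    (hRT2 : RT ∘ₗ (μ • LinearMap.id + LT) = LinearMap.id) :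
    P ∘ₗ R - RT ∘ₗ Q =
      RT ∘ₗ (LT ∘ₗ (P ∘ₗ T - TT ∘ₗ Q) ∘ₗ L + μ • (P - Q)) ∘ₗ R := by
  have shift : LT ∘ₗ P - Q ∘ₗ L + μ • (P - Q) =
      (μ • LinearMap.id + LT) ∘ₗ P - Q ∘ₗ (μ • LinearMap.id + L) := by
    rw [LinearMap.add_comp, LinearMap.comp_add, LinearMap.smul_comp, LinearMap.comp_smul,
      LinearMap.id_comp, LinearMap.comp_id]
    module
  rw [LinearMap.comp_sub_comp_comp_eq_of_inverse P Q hT2 hTT1, shift,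
    LinearMap.comp_sub_comp_comp_eq_sub P Q hR1 hRT2]

/-- Algebraic error-representation identity (Section 4.4): let
`L : U → U`, `L_T : V → V`, `P, Q : U → V` be linear maps and `μ ∈ ℝ`. Assume `T`, `T_T`,
`R`, `R_T` are two-sided inverses of `L`, `L_T`, `μ·id + L`, `μ·id + L_T` respectively
(these exist exactly when the latter maps are bijective). Then
`P ∘ R − R_T ∘ Q = R_T ∘ (L_T ∘ (P ∘ T − T_T ∘ Q) ∘ L + μ(P − Q)) ∘ R`. -/
theorem error_representation {U V : Type*} [AddCommGroup U] [Module ℝ U]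
    [AddCommGroup V] [Module ℝ V]
    (L T : U →ₗ[ℝ] U) (LT TT : V →ₗ[ℝ] V) (P Q : U →ₗ[ℝ] V) (μ : ℝ)
    (R : U →ₗ[ℝ] U) (RT : V →ₗ[ℝ] V)
    (hT1 : L ∘ₗ T = LinearMap.id) (hT2 : T ∘ₗ L = LinearMap.id)
    (hTT1 : LT ∘ₗ TT = LinearMap.id) (hTT2 : TT ∘ₗ LT = LinearMap.id)
    (hR1 : (μ • LinearMap.id + L) ∘ₗ R = LinearMap.id)
    (hR2 : R ∘ₗ (μ • LinearMap.id + L) = LinearMap.id)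
    (hRT1 : (μ • LinearMap.id + LT) ∘ₗ RT = LinearMap.id)
    (hRT2 : RT ∘ₗ (μ • LinearMap.id + LT) = LinearMap.id) :
    P ∘ₗ R - RT ∘ₗ Q =
      RT ∘ₗ (LT ∘ₗ (P ∘ₗ T - TT ∘ₗ Q) ∘ₗ L + μ • (P - Q)) ∘ₗ R :=
  error_representation_general L T LT TT P Q μ R RT hT2 hTT1 hR1 hRT2
end

section
/- Let A be a unital C*-algebra, let λ₁ > 0, and let a ∈ A be a selfadjoint element with spectrum contained in [λ₁, ∞). Let s ∈ (0,1), ε ∈ (0, 2s], k ∈ (0,1], and let M, N be nonnegative integers. Then each e^{kℓ}·1 + a is invertible and ‖ a^{s-ε/2} · (k·sin(πs)/π) · ∑_{ℓ=-M}^{N} e^{(1-s)kℓ} (e^{kℓ}·1 + a)^{-1} ‖ ≤ C · max(1, ε^{-1}), where a^{s-ε/2} is defined by the continuous functional calculus applied to x ↦ x^{s-ε/2} and C depends only on s and λ₁ (not on k, M, N, or ε). -/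
/-!
The continuous functional calculus reduces everything to scalars: the operator is `f(a)` with
`f(x) = x^{s-ε/2} Q(x)`, `Q` the scalar sinc quadrature, so its norm is at most
`sup_{x ≥ λ₁} |f(x)|`. Writing `x = e^y`, the summand `e^{(1-s)kℓ}/(e^{kℓ}+e^y)` is bounded both by
`e^{-sy} e^{(1-s)(kℓ-y)}` and by `e^{-sy} e^{-s(kℓ-y)}`. Using the first bound for `kℓ ≤ y` and the
second for `kℓ > y` leaves two geometric series of ratios `e^{-(1-s)k}` and `e^{-sk}`, whence
`Q(x) ≤ (2/(1-s) + 2/s) x^{-s}` uniformly in `k ≤ 1`, `M`, `N`. Finally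
`x^{s-ε/2} x^{-s} = x^{-ε/2} ≤ max(1, λ₁⁻¹)` because `ε/2 ≤ s < 1`.
-/

open Real Finset

lemma inv_one_sub_exp_neg_le_s15 {c : ℝ} (hc0 : 0 < c) (hc1 : c ≤ 1) :
    (1 - exp (-c))⁻¹ ≤ 2 / c := by
  have h : exp (-c) ≤ (1 + c)⁻¹ := by
    rw [exp_neg]; exact inv_anti₀ (by linarith) (by linarith [add_one_le_exp c])
  have h' : (1 + c)⁻¹ ≤ 1 - c / 2 := by
    rw [inv_le_iff_one_le_mul₀ (by linarith)]; nlinarith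
  rw [← inv_div]
  exact inv_anti₀ (by positivity) (by linarith)

lemma sum_exp_neg_mul_le_of_injOn {ι : Type*} {c : ℝ} (hc : 0 < c) (T : Finset ι)
    {n : ι → ℤ} (hinj : Set.InjOn n T) (hn : ∀ i ∈ T, 0 ≤ n i) :
    ∑ i ∈ T, exp (-(c * n i)) ≤ (1 - exp (-c))⁻¹ := by
  have hr0 : 0 ≤ exp (-c) := (exp_pos _).le
  have hr1 : exp (-c) < 1 := exp_lt_one_iff.mpr (by linarith)
  have hpow : ∀ i ∈ T, exp (-(c * n i)) = exp (-c) ^ (n i).toNat := by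
    intro i hi
    have hcast : ((n i).toNat : ℝ) = n i := by exact_mod_cast Int.toNat_of_nonneg (hn i hi)
    rw [← exp_nat_mul, hcast]
    ring_nf
  have hinj' : Set.InjOn (fun i => (n i).toNat) T := fun i hi j hj h =>
    hinj hi hj (by have := hn i hi; have := hn j hj; simp only at h; omega)
  calc ∑ i ∈ T, exp (-(c * n i)) = ∑ j ∈ T.image (fun i => (n i).toNat), exp (-c) ^ j := by
        rw [sum_image hinj', sum_congr rfl hpow]
    _ ≤ ∑' j : ℕ, exp (-c) ^ j :=
        (summable_geometric_of_lt_one hr0 hr1).sum_le_tsum _ fun j _ => pow_nonneg hr0 j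
    _ = (1 - exp (-c))⁻¹ := tsum_geometric_of_lt_one hr0 hr1

lemma exp_mul_inv_exp_add_exp_le_left (s t y : ℝ) :
    exp ((1 - s) * t) * (exp t + exp y)⁻¹ ≤ exp (-(s * y)) * exp ((1 - s) * (t - y)) := by
  calc exp ((1 - s) * t) * (exp t + exp y)⁻¹ ≤ exp ((1 - s) * t) * (exp y)⁻¹ := by
        gcongr; linarith [exp_pos t]
    _ = _ := by rw [← exp_neg, ← exp_add, ← exp_add]; ring_nf

lemma exp_mul_inv_exp_add_exp_le_right (s t y : ℝ) :
    exp ((1 - s) * t) * (exp t + exp y)⁻¹ ≤ exp (-(s * y)) * exp (-(s * (t - y))) := by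
  calc exp ((1 - s) * t) * (exp t + exp y)⁻¹ ≤ exp ((1 - s) * t) * (exp t)⁻¹ := by
        gcongr; linarith [exp_pos y]
    _ = _ := by rw [← exp_neg, ← exp_add, ← exp_add]; ring_nf

lemma sum_exp_mul_inv_exp_add_exp_le {s k : ℝ} (hs0 : 0 < s) (hs1 : s < 1) (hk0 : 0 < k)
    (hk1 : k ≤ 1) (y : ℝ) (T : Finset ℤ) :
    k * ∑ ℓ ∈ T, exp ((1 - s) * (k * ℓ)) * (exp (k * ℓ) + exp y)⁻¹ ≤
      (2 / (1 - s) + 2 / s) * exp (-(s * y)) := by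
  set L := ⌊y / k⌋
  have hL : k * L ≤ y := by
    have := Int.floor_le (y / k)
    rwa [le_div_iff₀' hk0] at this
  have hL1 : y < k * (L + 1) := by
    have := Int.lt_floor_add_one (y / k)
    rwa [div_lt_iff₀' hk0] at this
  have hc0 : 0 < (1 - s) * k := by nlinarith
  have hc0' : 0 < s * k := by positivity
  have below : ∑ ℓ ∈ T with ℓ ≤ L, exp ((1 - s) * (k * ℓ)) * (exp (k * ℓ) + exp y)⁻¹ ≤
      exp (-(s * y)) * (2 / ((1 - s) * k)) := by
    calc _ ≤ ∑ ℓ ∈ T with ℓ ≤ L, exp (-(s * y)) * exp (-((1 - s) * k * ((L - ℓ : ℤ) : ℝ))) := by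
          refine sum_le_sum fun ℓ _ => (exp_mul_inv_exp_add_exp_le_left s _ y).trans ?_
          gcongr 1
          rw [exp_le_exp]
          push_cast
          nlinarith
      _ ≤ exp (-(s * y)) * (2 / ((1 - s) * k)) := by
          rw [← mul_sum]
          gcongr
          refine (sum_exp_neg_mul_le_of_injOn hc0 _ (fun i _ j _ h => by omega) ?_).trans
            (inv_one_sub_exp_neg_le_s15 hc0 (by nlinarith))
          intro ℓ hℓ; simp only [mem_filter] at hℓ; omega
  have above : ∑ ℓ ∈ T with ¬ℓ ≤ L, exp ((1 - s) * (k * ℓ)) * (exp (k * ℓ) + exp y)⁻¹ ≤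
      exp (-(s * y)) * (2 / (s * k)) := by
    calc _ ≤ ∑ ℓ ∈ T with ¬ℓ ≤ L, exp (-(s * y)) * exp (-(s * k * ((ℓ - (L + 1) : ℤ) : ℝ))) := by
          refine sum_le_sum fun ℓ _ => (exp_mul_inv_exp_add_exp_le_right s _ y).trans ?_
          gcongr 1
          rw [exp_le_exp]
          push_cast
          nlinarith
      _ ≤ exp (-(s * y)) * (2 / (s * k)) := by
          rw [← mul_sum]
          gcongr
          refine (sum_exp_neg_mul_le_of_injOn hc0' _ (fun i _ j _ h => by omega) ?_).trans
            (inv_one_sub_exp_neg_le_s15 hc0' (by nlinarith))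
          intro ℓ hℓ; simp only [mem_filter] at hℓ; omega
  rw [← sum_filter_add_sum_filter_not T (· ≤ L)]
  calc _ ≤ k * (exp (-(s * y)) * (2 / ((1 - s) * k)) + exp (-(s * y)) * (2 / (s * k))) := by
        gcongr
    _ = _ := by field_simp

lemma rpow_neg_le_max_one_inv {x lam p : ℝ} (hlam : 0 < lam) (hx : lam ≤ x) (hp0 : 0 ≤ p)
    (hp1 : p ≤ 1) : x ^ (-p) ≤ max 1 lam⁻¹ := by
  have hx0 : 0 < x := hlam.trans_le hx
  rcases le_total 1 x with h | h
  · exact (rpow_le_one_of_one_le_of_nonpos h (by linarith)).trans (le_max_left _ _)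
  · calc x ^ (-p) ≤ x ^ (-1 : ℝ) := rpow_le_rpow_of_exponent_ge hx0 h (by linarith)
      _ = x⁻¹ := rpow_neg_one x
      _ ≤ lam⁻¹ := inv_anti₀ hlam hx
      _ ≤ max 1 lam⁻¹ := le_max_right _ _

/-- The sinc quadrature `Q_k^{-s}(x)` of `x^{-s}`. -/
noncomputable def sincQuadrature (s k : ℝ) (M N : ℕ) (x : ℝ) : ℝ :=
  k * sin (π * s) / π * ∑ ℓ ∈ Icc (-(M : ℤ)) N, exp ((1 - s) * (k * ℓ)) * (exp (k * ℓ) + x)⁻¹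

lemma sincQuadrature_nonneg {s : ℝ} (hs0 : 0 ≤ s) (hs1 : s ≤ 1) {k : ℝ} (hk : 0 ≤ k) (M N : ℕ)
    {x : ℝ} (hx : 0 ≤ x) : 0 ≤ sincQuadrature s k M N x := by
  have : 0 ≤ sin (π * s) := sin_nonneg_of_nonneg_of_le_pi (by positivity) (by nlinarith [pi_pos])
  unfold sincQuadrature
  positivity

lemma sincQuadrature_le {s k : ℝ} (hs0 : 0 < s) (hs1 : s < 1) (hk0 : 0 < k) (hk1 : k ≤ 1)
    (M N : ℕ) {x : ℝ} (hx : 0 < x) :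
    sincQuadrature s k M N x ≤ (2 / (1 - s) + 2 / s) * x ^ (-s) := by
  have hsinc : sin (π * s) / π ≤ 1 := by
    rw [div_le_one pi_pos]; linarith [sin_le_one (π * s), pi_gt_three]
  have hsum := sum_exp_mul_inv_exp_add_exp_le hs0 hs1 hk0 hk1 (log x) (Icc (-(M : ℤ)) N)
  rw [exp_log hx, show -(s * log x) = log x * -s by ring, ← rpow_def_of_pos hx] at hsum
  have hS : 0 ≤ k * ∑ ℓ ∈ Icc (-(M : ℤ)) N, exp ((1 - s) * (k * ℓ)) * (exp (k * ℓ) + x)⁻¹ := by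
    positivity
  calc sincQuadrature s k M N x
      = sin (π * s) / π * (k * ∑ ℓ ∈ Icc (-(M : ℤ)) N,
          exp ((1 - s) * (k * ℓ)) * (exp (k * ℓ) + x)⁻¹) := by
        unfold sincQuadrature; ring
    _ ≤ _ := (mul_le_of_le_one_left hS hsinc).trans hsum

lemma continuousOn_sincQuadrature (s k : ℝ) (M N : ℕ) :
    ContinuousOn (sincQuadrature s k M N) (Set.Ici 0) := by
  refine continuousOn_const.mul (continuousOn_finsetSum _ fun ℓ _ => ?_)
  exact continuousOn_const.mul <| (continuousOn_const.add continuousOn_id).inv₀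
    fun x hx => (add_pos_of_pos_of_nonneg (exp_pos _) hx).ne'

lemma isUnit_smul_one_add {A : Type*} [Ring A] [Algebra ℝ A] {a : A}
    (ha : spectrum ℝ a ⊆ Set.Ici 0) {c : ℝ} (hc : 0 < c) : IsUnit (c • (1 : A) + a) := by
  have hnot : -c ∉ spectrum ℝ a := fun h => by linarith [Set.mem_Ici.mp (ha h)]
  have := (spectrum.notMem_iff.mp hnot).neg
  rwa [neg_sub, map_neg, sub_neg_eq_add, Algebra.algebraMap_eq_smul_one, add_comm] at this

section CFC

variable {A : Type*} [Ring A] [StarRing A] [Algebra ℝ A] [TopologicalSpace A]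
  [ContinuousFunctionalCalculus ℝ A IsSelfAdjoint] {a : A}

lemma ringInverse_smul_one_add_eq_cfc (ha : IsSelfAdjoint a) {c : ℝ}
    (hc : ∀ x ∈ spectrum ℝ a, c + x ≠ 0) :
    Ring.inverse (c • (1 : A) + a) = cfc (fun x => (c + x)⁻¹) a := by
  rw [cfc_inv (fun x => c + x) a hc, cfc_const_add c (fun x => x) a, cfc_id' ℝ a,
    Algebra.algebraMap_eq_smul_one]

lemma smul_sum_ringInverse_eq_cfc_sincQuadrature (ha : IsSelfAdjoint a)
    (hspec : spectrum ℝ a ⊆ Set.Ici 0) (s k : ℝ) (M N : ℕ) :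
    (k * sin (π * s) / π) • ∑ ℓ ∈ Icc (-(M : ℤ)) N,
        exp ((1 - s) * (k * ℓ)) • Ring.inverse (exp (k * ℓ) • (1 : A) + a) =
      cfc (sincQuadrature s k M N) a := by
  have hne (ℓ : ℤ) : ∀ x ∈ spectrum ℝ a, exp (k * ℓ) + x ≠ 0 := fun x hx =>
    (add_pos_of_pos_of_nonneg (exp_pos _) (hspec hx)).ne'
  have hterm (ℓ : ℤ) : exp ((1 - s) * (k * ℓ)) • Ring.inverse (exp (k * ℓ) • (1 : A) + a) =
      cfc (fun x => exp ((1 - s) * (k * ℓ)) * (exp (k * ℓ) + x)⁻¹) a := by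
    rw [ringInverse_smul_one_add_eq_cfc ha (hne ℓ),
      ← cfc_const_mul _ (fun x => (exp (k * ℓ) + x)⁻¹) a
        ((continuousOn_const.add continuousOn_id).inv₀ (hne ℓ))]
  have hcont (ℓ : ℤ) : ContinuousOn (fun x => exp ((1 - s) * (k * ℓ)) * (exp (k * ℓ) + x)⁻¹)
      (spectrum ℝ a) :=
    continuousOn_const.mul ((continuousOn_const.add continuousOn_id).inv₀ (hne ℓ))
  rw [sum_congr rfl fun ℓ _ => hterm ℓ, ← cfc_sum _ a _ fun ℓ _ => hcont ℓ, sum_fn,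
    ← cfc_const_mul _ _ a (continuousOn_finsetSum _ fun ℓ _ => hcont ℓ)]
  rfl

end CFC

lemma rpow_mul_sincQuadrature_le {s k : ℝ} (hs0 : 0 < s) (hs1 : s < 1) (hk0 : 0 < k)
    (hk1 : k ≤ 1) (M N : ℕ) {lam x p : ℝ} (hlam : 0 < lam) (hx : lam ≤ x) (hp0 : 0 ≤ p)
    (hp1 : p ≤ 1) :
    x ^ (s - p) * sincQuadrature s k M N x ≤ (2 / (1 - s) + 2 / s) * max 1 lam⁻¹ := by
  have hx0 : 0 < x := hlam.trans_le hx
  calc x ^ (s - p) * sincQuadrature s k M N x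
      ≤ x ^ (s - p) * ((2 / (1 - s) + 2 / s) * x ^ (-s)) := by
        gcongr; exact sincQuadrature_le hs0 hs1 hk0 hk1 M N hx0
    _ = (2 / (1 - s) + 2 / s) * x ^ (-p) := by
        rw [mul_left_comm, ← rpow_add hx0]; ring_nf
    _ ≤ (2 / (1 - s) + 2 / s) * max 1 lam⁻¹ := by
        gcongr; exact rpow_neg_le_max_one_inv hlam hx hp0 hp1

/-- Operator-multiplier form of the sinc quadrature stability lemma
(Lemma 4.1): for `s ∈ (0,1)` and `λ₁ > 0` there is a constant `C` depending only on `s`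
and `λ₁` such that for every unital C*-algebra `A`, every selfadjoint `a ∈ A` with
spectrum contained in `[λ₁,∞)`, every `ε ∈ (0,2s]`, `k ∈ (0,1]` and all nonnegative
integers `M, N`: each `e^{kℓ}·1 + a` is invertible, and
`‖a^{s-ε/2} · (k sin(πs)/π) ∑_{ℓ=-M}^{N} e^{(1-s)kℓ} (e^{kℓ}·1+a)⁻¹‖ ≤ C max(1, ε⁻¹)`,
where `a^{s-ε/2} := cfc (x ↦ x^{s-ε/2}) a`. -/
theorem sinc_stability_operator (s lam1 : ℝ) (hs0 : 0 < s) (hs1 : s < 1)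
    (hlam1 : 0 < lam1) :
    ∃ C : ℝ, 0 < C ∧
      ∀ (A : Type) [CStarAlgebra A] (a : A), IsSelfAdjoint a →
        spectrum ℝ a ⊆ Set.Ici lam1 →
        ∀ (ε k : ℝ), 0 < ε → ε ≤ 2 * s → 0 < k → k ≤ 1 → ∀ (M N : ℕ),
          (∀ ℓ : ℤ, IsUnit (Real.exp (k * ℓ) • (1 : A) + a)) ∧
          ‖cfc (fun x : ℝ => x ^ (s - ε / 2)) a *
              ((k * Real.sin (Real.pi * s) / Real.pi) •
                ∑ ℓ ∈ Finset.Icc (-(M : ℤ)) (N : ℤ),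
                  Real.exp ((1 - s) * (k * ℓ)) •
                    Ring.inverse (Real.exp (k * ℓ) • (1 : A) + a))‖ ≤
            C * max 1 ε⁻¹ := by
  have h1s : 0 < 1 - s := by linarith
  refine ⟨(2 / (1 - s) + 2 / s) * max 1 lam1⁻¹, by positivity, ?_⟩
  intro A _ a ha hspec ε k hε0 hε2s hk0 hk1 M N
  have hnonneg : spectrum ℝ a ⊆ Set.Ici 0 := hspec.trans (Set.Ici_subset_Ici.mpr hlam1.le)
  refine ⟨fun ℓ => isUnit_smul_one_add hnonneg (exp_pos _), ?_⟩
  have hrpow : ContinuousOn (fun x : ℝ => x ^ (s - ε / 2)) (spectrum ℝ a) := fun x hx =>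
    (continuousAt_rpow_const x _ (Or.inl (hlam1.trans_le (hspec hx)).ne')).continuousWithinAt
  rw [smul_sum_ringInverse_eq_cfc_sincQuadrature ha hnonneg,
    ← cfc_mul _ _ a hrpow ((continuousOn_sincQuadrature s k M N).mono hnonneg)]
  refine norm_cfc_le (by positivity) fun x hx => ?_
  have hx0 : 0 ≤ x := hnonneg hx
  rw [norm_of_nonneg (mul_nonneg (rpow_nonneg hx0 _)
    (sincQuadrature_nonneg hs0.le hs1.le hk0.le M N hx0))]
  calc x ^ (s - ε / 2) * sincQuadrature s k M N x ≤ (2 / (1 - s) + 2 / s) * max 1 lam1⁻¹ :=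
        rpow_mul_sincQuadrature_le hs0 hs1 hk0 hk1 M N hlam1 (hspec hx) (by linarith)
          (by linarith)
    _ ≤ (2 / (1 - s) + 2 / s) * max 1 lam1⁻¹ * max 1 ε⁻¹ :=
        le_mul_of_one_le_right (by positivity) (le_max_left _ _)
end

section
/- Let s ∈ (0,1), ε ∈ (0, 2s], t ∈ ℝ and μ > 0. Then for every real sequence f = (f_j)_{j≥1} with ∑_{j≥1} λ_j^{t-2s} f_j² < ∞, one has ∑_{j≥1} λ_j^{t-ε} ((μ+λ_j)^{-1} f_j)² ≤ max(1, λ₁^{-1})² · min(1, μ^{s-1-ε/2})² · ∑_{j≥1} λ_j^{t-2s} f_j²; equivalently ‖(μI+L)^{-1} f‖_{Ḣ^{t-ε}} ≤ max(1, λ₁^{-1}) · min(1, μ^{s-1-ε/2}) · ‖f‖_{Ḣ^{t-2s}}. -/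
/-!
With `a = s - ε/2 ∈ [0, 1]` the weights factor as `λ^(t-ε) = λ^(t-2s) (λ^a)²`, so it suffices to
bound the multiplier `λ^a / (μ + λ)` uniformly in `λ ≥ λ₁`. Splitting `λ^a ≤ max(1, λ)` gives the
bound `max(1, λ₁⁻¹)`, and weighted AM–GM, `λ^a μ^(1-a) ≤ a λ + (1-a) μ ≤ μ + λ`, gives `μ^(a-1)`.
-/

open Real

lemma Real.rpow_le_max_one_inv_mul_self {a lam1 x : ℝ} (ha0 : 0 ≤ a) (ha1 : a ≤ 1)
    (hlam1 : 0 < lam1) (hx : lam1 ≤ x) : x ^ a ≤ max 1 lam1⁻¹ * x := by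
  rcases le_or_gt 1 x with h | h
  · calc x ^ a ≤ x ^ (1 : ℝ) := rpow_le_rpow_of_exponent_le h ha1
      _ = 1 * x := by rw [rpow_one, one_mul]
      _ ≤ max 1 lam1⁻¹ * x := by gcongr; exact le_max_left _ _
  · calc x ^ a ≤ 1 := rpow_le_one (hlam1.le.trans hx) h.le ha0
      _ = lam1⁻¹ * lam1 := (inv_mul_cancel₀ hlam1.ne').symm
      _ ≤ max 1 lam1⁻¹ * x := by gcongr; exact le_max_right _ _

lemma Real.rpow_mul_rpow_one_sub_le_add {a x y : ℝ} (ha0 : 0 ≤ a) (ha1 : a ≤ 1)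
    (hx : 0 ≤ x) (hy : 0 ≤ y) : x ^ a * y ^ (1 - a) ≤ x + y := by
  have := geom_mean_le_arith_mean2_weighted ha0 (sub_nonneg.2 ha1) hx hy (by ring)
  nlinarith

lemma Real.rpow_le_rpow_sub_one_mul_add {a μ x : ℝ} (ha0 : 0 ≤ a) (ha1 : a ≤ 1)
    (hμ : 0 < μ) (hx : 0 ≤ x) : x ^ a ≤ μ ^ (a - 1) * (μ + x) := by
  have hinv : μ ^ (a - 1) * μ ^ (1 - a) = 1 := by
    rw [← rpow_add hμ, sub_add_sub_cancel', sub_self, rpow_zero]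
  calc x ^ a = μ ^ (a - 1) * (x ^ a * μ ^ (1 - a)) := by linear_combination (-x ^ a) * hinv
    _ ≤ μ ^ (a - 1) * (μ + x) := by
      gcongr
      linarith [rpow_mul_rpow_one_sub_le_add ha0 ha1 hx hμ.le]

lemma rpow_mul_inv_add_le_max_mul_min {a lam1 μ x : ℝ} (ha0 : 0 ≤ a) (ha1 : a ≤ 1)
    (hlam1 : 0 < lam1) (hx : lam1 ≤ x) (hμ : 0 < μ) :
    x ^ a * (μ + x)⁻¹ ≤ max 1 lam1⁻¹ * min 1 (μ ^ (a - 1)) := by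
  have hx0 : 0 < x := hlam1.trans_le hx
  rw [← div_eq_mul_inv, div_le_iff₀ (by positivity), mul_assoc,
    min_mul_of_nonneg _ _ (by positivity : (0 : ℝ) ≤ μ + x),
    mul_min_of_nonneg _ _ (by positivity : (0 : ℝ) ≤ max 1 lam1⁻¹)]
  refine le_min ?_ ?_
  · calc x ^ a ≤ max 1 lam1⁻¹ * x := rpow_le_max_one_inv_mul_self ha0 ha1 hlam1 hx
      _ ≤ max 1 lam1⁻¹ * (1 * (μ + x)) := by gcongr; linarith
  · calc x ^ a ≤ μ ^ (a - 1) * (μ + x) := rpow_le_rpow_sub_one_mul_add ha0 ha1 hμ hx0.le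
      _ ≤ max 1 lam1⁻¹ * (μ ^ (a - 1) * (μ + x)) :=
        le_mul_of_one_le_left (by positivity) (le_max_left _ _)

lemma summable_and_tsum_le_mul_of_le {ι : Type*} {g h : ι → ℝ} {K : ℝ}
    (hg : ∀ i, 0 ≤ g i) (hgh : ∀ i, g i ≤ K * h i) (hh : Summable h) :
    Summable g ∧ ∑' i, g i ≤ K * ∑' i, h i := by
  have hg_sum : Summable g := .of_nonneg_of_le hg hgh (hh.mul_left K)
  refine ⟨hg_sum, ?_⟩
  rw [← tsum_mul_left]
  exact hg_sum.tsum_le_tsum hgh (hh.mul_left K)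

theorem resolvent_smoothing_general (lam1 : ℝ) (hlam1 : 0 < lam1) (lam : ℕ → ℝ)
    (hlam : ∀ j, lam1 ≤ lam j) (s ε t μ : ℝ) (hs1 : s < 1)
    (hε0 : 0 < ε) (hε : ε ≤ 2 * s) (hμ : 0 < μ)
    (f : ℕ → ℝ) (hf : Summable fun j => lam j ^ (t - 2 * s) * f j ^ 2) :
    Summable (fun j => lam j ^ (t - ε) * ((μ + lam j)⁻¹ * f j) ^ 2) ∧
    ∑' j, lam j ^ (t - ε) * ((μ + lam j)⁻¹ * f j) ^ 2 ≤
      (max 1 lam1⁻¹) ^ 2 * min 1 (μ ^ (s - 1 - ε / 2)) ^ 2 *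
        ∑' j, lam j ^ (t - 2 * s) * f j ^ 2 := by
  set a := s - ε / 2 with ha
  have hexp : s - 1 - ε / 2 = a - 1 := by ring
  have ha0 : 0 ≤ a := by linarith
  have ha1 : a ≤ 1 := by linarith
  rw [hexp, ← mul_pow]
  refine summable_and_tsum_le_mul_of_le (fun j => ?_) (fun j => ?_) hf
  · have := hlam1.trans_le (hlam j)
    positivity
  · have hpos : 0 < lam j := hlam1.trans_le (hlam j)
    have hsplit : lam j ^ (t - ε) = lam j ^ (t - 2 * s) * (lam j ^ a) ^ 2 := by
      rw [sq, ← rpow_add hpos, ← rpow_add hpos, ha]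
      ring_nf
    have hmult := rpow_mul_inv_add_le_max_mul_min ha0 ha1 hlam1 (hlam j) hμ
    calc lam j ^ (t - ε) * ((μ + lam j)⁻¹ * f j) ^ 2
        = (lam j ^ a * (μ + lam j)⁻¹) ^ 2 * (lam j ^ (t - 2 * s) * f j ^ 2) := by
          rw [hsplit]; ring
      _ ≤ _ := by gcongr

/-- Per-quadrature-point resolvent smoothing bound (from the proof of
the sinc stability lemma): with eigenvalues `λ_j ≥ λ₁ > 0`, for `s ∈ (0,1)`,
`ε ∈ (0,2s]`, `t ∈ ℝ` and `μ > 0`, for every sequence `f` with `∑ λ_j^{t-2s} f_j² < ∞`,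
the series `∑ λ_j^{t-ε} ((μ+λ_j)⁻¹ f_j)²` converges and
`∑ λ_j^{t-ε} ((μ+λ_j)⁻¹ f_j)² ≤ max(1,λ₁⁻¹)² min(1, μ^{s-1-ε/2})² ∑ λ_j^{t-2s} f_j²`,
i.e. `‖(μI+L)⁻¹ f‖_{Ḣ^{t-ε}} ≤ max(1,λ₁⁻¹) min(1, μ^{s-1-ε/2}) ‖f‖_{Ḣ^{t-2s}}`. -/
theorem resolvent_smoothing (lam1 : ℝ) (hlam1 : 0 < lam1) (lam : ℕ → ℝ)
    (hlam : ∀ j, lam1 ≤ lam j) (s ε t μ : ℝ) (hs0 : 0 < s) (hs1 : s < 1)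
    (hε0 : 0 < ε) (hε : ε ≤ 2 * s) (hμ : 0 < μ)
    (f : ℕ → ℝ) (hf : Summable fun j => lam j ^ (t - 2 * s) * f j ^ 2) :
    Summable (fun j => lam j ^ (t - ε) * ((μ + lam j)⁻¹ * f j) ^ 2) ∧
    ∑' j, lam j ^ (t - ε) * ((μ + lam j)⁻¹ * f j) ^ 2 ≤
      (max 1 lam1⁻¹) ^ 2 * min 1 (μ ^ (s - 1 - ε / 2)) ^ 2 *
        ∑' j, lam j ^ (t - 2 * s) * f j ^ 2 :=
  resolvent_smoothing_general lam1 hlam1 lam hlam s ε t μ hs1 hε0 hε hμ f hf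
end
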